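/- For integers n ≥ 2k+2 and k ≥ 3 and prime power q, one has [n−2 choose k−1]_q < 1 + q^{(k−1)(k+1)}·[n−k−2 choose k−1]_q. -/
import Mathlib


open Module Set

/-- The Gaussian (q-)binomial coefficient, via the standard Pascal-type recurrence. -/
def gbinom (q : ℕ) : ℕ → ℕ → ℕ
  | _, 0 => 1
  | 0, _ + 1 => 0
  | n + 1, k + 1 => gbinom q n k + q ^ (k + 1) * gbinom q n (k + 1)


lemma gbinom_zero (q n : ℕ) : gbinom q n 0 = 1 := by cases n <;> rfl

lemma gbinom_eq_zero (q : ℕ) : ∀ n k, n < k → gbinom q n k = 0 := by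
  intro n
  induction n with
  | zero =>
    intro k hk
    match k, hk with
    | k + 1, _ => rfl
  | succ n ih =>
    intro k hk
    match k, hk with
    | k + 1, hk =>
      show gbinom q n k + q ^ (k + 1) * gbinom q n (k + 1) = 0
      rw [ih k (by omega), ih (k + 1) (by omega)]
      ring

lemma gbinom_prod (q : ℕ) (hq : 1 ≤ q) :
    ∀ n k, k ≤ n →
      gbinom q n k * ∏ i ∈ Finset.range k, (q ^ (i + 1) - 1)
        = ∏ i ∈ Finset.range k, (q ^ (n - k + 1 + i) - 1) := by
  intro n
  induction n with
  | zero =>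
    intro k hk
    interval_cases k
    simp [gbinom_zero]
  | succ n ih =>
    intro k hk
    cases k with
    | zero => simp [gbinom_zero]
    | succ k =>
      have hkn : k ≤ n := by omega
      have htarget :
          ∏ i ∈ Finset.range (k + 1), (q ^ (n + 1 - (k + 1) + 1 + i) - 1)
            = (∏ i ∈ Finset.range k, (q ^ (n - k + 1 + i) - 1)) * (q ^ (n + 1) - 1) := by
        rw [Finset.prod_range_succ]
        congr 1
        · exact Finset.prod_congr rfl fun i _ => by congr 2; omega
        · congr 2
          omega
      rw [htarget]
      show (gbinom q n k + q ^ (k + 1) * gbinom q n (k + 1)) *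
          ∏ i ∈ Finset.range (k + 1), (q ^ (i + 1) - 1) = _
      have ih1 := ih k hkn
      rcases Nat.lt_or_ge k n with hlt | hge
      · have ih2 := ih (k + 1) hlt
        have hB :
            ∏ i ∈ Finset.range (k + 1), (q ^ (n - (k + 1) + 1 + i) - 1)
              = (∏ i ∈ Finset.range k, (q ^ (n - k + 1 + i) - 1)) * (q ^ (n - k) - 1) := by
          rw [Finset.prod_range_succ']
          congr 1
          · exact Finset.prod_congr rfl fun i _ => by congr 2; omega
          · congr 2
            omega
        rw [hB] at ih2
        rw [add_mul, mul_assoc (q ^ (k + 1)), ih2,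
          Finset.prod_range_succ, ← mul_assoc, ih1]
        -- goal: A * (q^(k+1)-1) + A * (q^(n-k)-1) * q^(k+1) = A * (q^(n+1)-1)
        have hab : q ^ (k + 1) * q ^ (n - k) = q ^ (n + 1) := by
          rw [← pow_add]; congr 1; omega
        have ha : 1 ≤ q ^ (k + 1) := Nat.one_le_pow _ _ (by omega)
        have hb : 1 ≤ q ^ (n - k) := Nat.one_le_pow _ _ (by omega)
        have hc : 1 ≤ q ^ (n + 1) := Nat.one_le_pow _ _ (by omega)
        set A := ∏ i ∈ Finset.range k, (q ^ (n - k + 1 + i) - 1)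
        zify [ha, hb, hc]
        have hab' : (q : ℤ) ^ (k + 1) * (q : ℤ) ^ (n - k) = (q : ℤ) ^ (n + 1) := by
          exact_mod_cast hab
        rw [← hab']
        ring
      · have hkeq : k = n := by omega
        subst hkeq
        rw [gbinom_eq_zero q k (k + 1) (by omega), mul_zero, add_zero,
          Finset.prod_range_succ, ← mul_assoc, ih1]

lemma gbinom_key (q j m : ℕ) (hq : 2 ≤ q) (hm : j + 1 ≤ m) :
    gbinom q (m + j + 1) j ≤ q ^ (j * (j + 2)) * gbinom q m j := by
  have hD : 0 < ∏ i ∈ Finset.range j, (q ^ (i + 1) - 1) :=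
    Finset.prod_pos fun i _ => by
      have h2 : 2 ≤ q ^ (i + 1) := le_trans hq (Nat.le_self_pow (by omega) q)
      omega
  apply Nat.le_of_mul_le_mul_right _ hD
  rw [gbinom_prod q (by omega) (m + j + 1) j (by omega), mul_assoc,
    gbinom_prod q (by omega) m j (by omega)]
  calc ∏ i ∈ Finset.range j, (q ^ (m + j + 1 - j + 1 + i) - 1)
      ≤ ∏ i ∈ Finset.range j, (q ^ (j + 2) * (q ^ (m - j + 1 + i) - 1)) := by
        apply Finset.prod_le_prod'
        intro i _
        have he : m + j + 1 - j + 1 + i = (j + 1) + (m - j + 1 + i) := by omega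
        rw [he]
        have ht : q ≤ q ^ (m - j + 1 + i) := by
          calc q = q ^ 1 := (pow_one q).symm
            _ ≤ q ^ (m - j + 1 + i) := Nat.pow_le_pow_right (by omega) (by omega)
        have h1t : 1 ≤ q ^ (m - j + 1 + i) := by omega
        have ha : 1 ≤ q ^ (j + 1) := Nat.one_le_pow _ _ (by omega)
        have hat : 1 ≤ q ^ (j + 1 + (m - j + 1 + i)) := Nat.one_le_pow _ _ (by omega)
        zify [h1t, hat]
        have e1 : (q : ℤ) ^ (j + 1 + (m - j + 1 + i))
            = (q : ℤ) ^ (j + 1) * (q : ℤ) ^ (m - j + 1 + i) := pow_add _ _ _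
        have e2 : (q : ℤ) ^ (j + 2) = (q : ℤ) * (q : ℤ) ^ (j + 1) := by ring
        rw [e1, e2]
        have hq' : (2 : ℤ) ≤ (q : ℤ) := by exact_mod_cast hq
        have ht' : (q : ℤ) ≤ (q : ℤ) ^ (m - j + 1 + i) := by exact_mod_cast ht
        have ha' : (1 : ℤ) ≤ (q : ℤ) ^ (j + 1) := by exact_mod_cast ha
        nlinarith [mul_nonneg (by nlinarith : (0 : ℤ) ≤ ((q : ℤ) - 1) * ((q : ℤ) ^ (m - j + 1 + i) - 1) - 1)
          (by nlinarith : (0 : ℤ) ≤ (q : ℤ) ^ (j + 1))]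
    _ = q ^ (j * (j + 2)) * ∏ i ∈ Finset.range j, (q ^ (m - j + 1 + i) - 1) := by
        rw [Finset.prod_mul_distrib, Finset.prod_const, Finset.card_range, ← pow_mul,
          mul_comm (j + 2) j]

theorem stmt_6 (q n k : ℕ) (hq : IsPrimePow q) (hn : 2 * k + 2 ≤ n) (hk : 3 ≤ k) :
    gbinom q (n - 2) (k - 1) < 1 + q ^ ((k - 1) * (k + 1)) * gbinom q (n - k - 2) (k - 1) := by
  have hq2 : 2 ≤ q := hq.two_le
  have h1 : n - 2 = (n - k - 2) + (k - 1) + 1 := by omega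
  have h2 : k + 1 = (k - 1) + 2 := by omega
  calc gbinom q (n - 2) (k - 1)
      ≤ q ^ ((k - 1) * ((k - 1) + 2)) * gbinom q (n - k - 2) (k - 1) := by
        rw [h1]; exact gbinom_key q (k - 1) (n - k - 2) hq2 (by omega)
    _ < 1 + q ^ ((k - 1) * (k + 1)) * gbinom q (n - k - 2) (k - 1) := by
        rw [h2]; omega
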